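/- arXiv:1506.01362 — 3 statements merged into one kernel-verified Lean document; each statement's English description precedes it below -/
import Mathlib

section
/- Let $G_1 = \bigsqcup_{i=1}^r G_{1i}$ and $G_2 = \bigsqcup_{i=1}^s G_{2i}$ be disjoint unions of connected graphs on disjoint vertex sets $[n_1] = \bigcup [n_{1i}]$ and $[n_2] = \bigcup [n_{2i}]$ with $r, s \geq 2$. Then a nonempty subset $T$ of the vertex set of $G_1 * G_2$ has the cut point property if and only if either $T = [n_2] \cup \bigcup_{i=1}^r T_{1i}$ with each $T_{1i} \in \mathcal{C}(G_{1i})$, or $T = [n_1] \cup \bigcup_{i=1}^s T_{2i}$ with each $T_{2i} \in \mathcal{C}(G_{2i})$. -/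
open SimpleGraph Set

/-- Number of connected components of the induced subgraph of `G` on `s`. -/
noncomputable def nc {V : Type*} (G : SimpleGraph V) (s : Set V) : ℕ :=
  Nat.card (G.induce s).ConnectedComponent

/-- `T` has the cut point property for `G`: every `i ∈ T` is a cut point of the
induced subgraph on `Tᶜ ∪ {i}` (removing `i` increases the number of components). -/
def CutPointProperty {V : Type*} (G : SimpleGraph V) (T : Set V) : Prop :=
  ∀ i ∈ T, nc G (Tᶜ ∪ {i}) < nc G Tᶜ

/-- The join `G₁ * G₂` of two graphs on disjoint vertex sets. -/
def joinGraph {V₁ V₂ : Type*} (G₁ : SimpleGraph V₁) (G₂ : SimpleGraph V₂) :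
    SimpleGraph (V₁ ⊕ V₂) where
  Adj v w :=
    match v, w with
    | Sum.inl a, Sum.inl b => G₁.Adj a b
    | Sum.inr a, Sum.inr b => G₂.Adj a b
    | Sum.inl _, Sum.inr _ => True
    | Sum.inr _, Sum.inl _ => True
  symm := by constructor; rintro (a | a) (b | b) h <;> simp_all <;> exact h.symm
  loopless := by constructor; rintro (a | a) h <;> simp_all

/-- Disjoint union of an indexed family of graphs. -/
def sigmaGraph {ι : Type*} {V : ι → Type*} (G : ∀ i, SimpleGraph (V i)) :
    SimpleGraph (Σ i, V i) where
  Adj v w := ∃ h : v.1 = w.1, (G w.1).Adj (h ▸ v.2) w.2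
  symm := by
    constructor
    rintro ⟨i, a⟩ ⟨j, b⟩ ⟨h, hab⟩
    dsimp at h hab ⊢
    subst h
    exact ⟨rfl, hab.symm⟩
  loopless := by
    constructor
    rintro ⟨i, a⟩ ⟨h, hab⟩
    dsimp at h hab
    exact (G i).irrefl hab
/-- The corona `H ⊙ H'`: one copy of `H'` for each vertex `v` of `H`,
with every vertex of the copy joined to `v`. -/
def coronaGraph {V₁ V₂ : Type*} (H : SimpleGraph V₁) (H' : SimpleGraph V₂) :
    SimpleGraph (V₁ ⊕ V₁ × V₂) where
  Adj v w :=
    match v, w with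
    | Sum.inl a, Sum.inl b => H.Adj a b
    | Sum.inl a, Sum.inr p => a = p.1
    | Sum.inr p, Sum.inl b => p.1 = b
    | Sum.inr p, Sum.inr q => p.1 = q.1 ∧ H'.Adj p.2 q.2
  symm := by
    constructor
    rintro (a | p) (b | q) h <;> dsimp at h ⊢
    · exact h.symm
    · exact h.symm
    · exact h.symm
    · exact ⟨h.1.symm, h.2.symm⟩
  loopless := by constructor; rintro (a | p) h <;> simp_all

/-- The whisker graph `W(H)`: a pendant vertex attached to each vertex of `H`. -/
def whiskerGraph {V : Type*} (H : SimpleGraph V) : SimpleGraph (V ⊕ V) where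
  Adj v w :=
    match v, w with
    | Sum.inl a, Sum.inl b => H.Adj a b
    | Sum.inl a, Sum.inr b => a = b
    | Sum.inr a, Sum.inl b => a = b
    | Sum.inr _, Sum.inr _ => False
  symm := by constructor; rintro (a | a) (b | b) h <;> simp_all; exact h.symm
  loopless := by constructor; rintro (a | a) h <;> simp_all

/-- `F` is (the vertex set of) a maximal clique of `G`. -/
def MaxClique {V : Type*} (G : SimpleGraph V) (F : Set V) : Prop :=
  Maximal G.IsClique F

/-- A graph is chordal if every cycle of length at least 4 has a chord. -/
def IsChordal {V : Type*} (G : SimpleGraph V) : Prop :=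
  ∀ (n : ℕ), 4 ≤ n → ∀ c : ℕ → V, Set.InjOn c (Set.Iio n) →
    (∀ i < n, G.Adj (c i) (c ((i + 1) % n))) →
    ∃ i < n, ∃ j < n, j ≠ i ∧ j ≠ (i + 1) % n ∧ i ≠ (j + 1) % n ∧ G.Adj (c i) (c j)

/-- A generalized block graph: a connected chordal graph in which any three distinct
maximal cliques with nonempty common intersection have all pairwise intersections equal. -/
def GenBlockGraph {V : Type*} (G : SimpleGraph V) : Prop :=
  G.Connected ∧ IsChordal G ∧
    ∀ F₁ F₂ F₃ : Set V, MaxClique G F₁ → MaxClique G F₂ → MaxClique G F₃ →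
      F₁ ≠ F₂ → F₁ ≠ F₃ → F₂ ≠ F₃ → (F₁ ∩ F₂ ∩ F₃).Nonempty →
      F₁ ∩ F₂ = F₁ ∩ F₃ ∧ F₁ ∩ F₂ = F₂ ∩ F₃

/-- `A` is a cut set of `G`: deleting `A` increases the number of connected components. -/
def IsCutSet {V : Type*} (G : SimpleGraph V) (A : Set V) : Prop :=
  nc G Set.univ < nc G Aᶜ

/-- `A` is an inclusion-minimal cut set of `G`. -/
def IsMinCutSet {V : Type*} (G : SimpleGraph V) (A : Set V) : Prop :=
  IsCutSet G A ∧ ∀ B ⊂ A, ¬ IsCutSet G B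

/-- `A` is a `t`-minimal cut set of `G`: a minimal cut set which is the common
intersection of exactly `t` maximal cliques of `G` and disjoint from all other
maximal cliques. -/
def IsTMinCut {V : Type*} (G : SimpleGraph V) (t : ℕ) (A : Set V) : Prop :=
  IsMinCutSet G A ∧
  {F : Set V | MaxClique G F ∧ A ⊆ F}.ncard = t ∧
  ⋂₀ {F : Set V | MaxClique G F ∧ A ⊆ F} = A ∧
  ∀ F : Set V, MaxClique G F → ¬ A ⊆ F → F ∩ A = ∅

/-- `B` is a branch of the facet `F` in the clique complex of `G`. -/
def IsBranch {V : Type*} (G : SimpleGraph V) (F B : Set V) : Prop :=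
  MaxClique G B ∧ B ≠ F ∧ ∀ H : Set V, MaxClique G H → H ≠ F → H ∩ F ⊆ B ∩ F

/-- `F` is a leaf of the clique complex of `G`. -/
def IsLeafClique {V : Type*} (G : SimpleGraph V) (F : Set V) : Prop :=
  MaxClique G F ∧ ((∀ F' : Set V, MaxClique G F' → F' = F) ∨ ∃ B, IsBranch G F B)

/-
If `Tᶜ` meets both sides of the join, then the graphs induced on `Tᶜ` and on `Tᶜ ∪ {x}` are
connected, so no `x ∈ T` is a cut point. Hence `T` contains one side, say the second, and `Tᶜ`
lies in the disjoint union `G₁`, whose components are counted summand by summand: a vertex of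
`T` in `G₁ᵢ` is a cut point exactly when it is one for `T ∩ G₁ᵢ` in `G₁ᵢ`. A vertex of the
second side is adjacent to all of `Tᶜ`, so it is a cut point iff `Tᶜ` has at least two
components; this is automatic once every `T ∩ G₁ᵢ` has the cut point property, because then no
`T ∩ G₁ᵢ` is all of `G₁ᵢ` and `r ≥ 2`.
-/

section ComponentCount

variable {V V' : Type*} {G : SimpleGraph V} {G' : SimpleGraph V'}

lemma nc_empty (G : SimpleGraph V) : nc G ∅ = 0 := by
  simp [nc]

lemma nc_singleton (G : SimpleGraph V) (v : V) : nc G {v} = 1 :=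
  Nat.card_unique

lemma one_le_nc [Finite V] {s : Set V} (hs : s.Nonempty) : 1 ≤ nc G s :=
  have : Nonempty s := hs.to_subtype
  Nat.card_pos

lemma nc_le_one {s : Set V} (h : (G.induce s).Preconnected) : nc G s ≤ 1 :=
  have := h.subsingleton_connectedComponent
  Finite.card_le_one_iff_subsingleton.mpr this

lemma nc_image_embedding (f : G ↪g G') (s : Set V) : nc G' (f '' s) = nc G s :=
  Nat.card_congr <| Iso.connectedComponentEquiv <| RelIso.symm
    { toEquiv := Equiv.Set.image f s f.injective
      map_rel_iff' := f.map_adj_iff }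

lemma nc_preimage_iso (e : G ≃g G') (s : Set V') : nc G (e ⁻¹' s) = nc G' s := by
  rw [← nc_image_embedding e.toEmbedding]
  exact congrArg (nc G') (Set.image_preimage_eq s e.surjective)

lemma cutPointProperty_preimage_iso_iff (e : G ≃g G') (T : Set V') :
    CutPointProperty G (e ⁻¹' T) ↔ CutPointProperty G' T := by
  have hunion (v : V) : e ⁻¹' Tᶜ ∪ {v} = e ⁻¹' (Tᶜ ∪ {e v}) := by
    ext; simp
  unfold CutPointProperty
  rw [e.surjective.forall]
  simp only [Set.mem_preimage, hunion, ← Set.preimage_compl, nc_preimage_iso]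

lemma preconnected_induce_of_forall_adj {s : Set V} {v : V} (hv : v ∈ s)
    (h : ∀ u ∈ s, u ≠ v → G.Adj u v) : (G.induce s).Preconnected := by
  have hstar : ∀ u : s, (G.induce s).Reachable u ⟨v, hv⟩ := by
    rintro ⟨u, hu⟩
    by_cases huv : u = v
    · subst huv; rfl
    · exact Adj.reachable (h u hu huv)
  exact fun u w => (hstar u).trans (hstar w).symm

lemma not_cutPointProperty_univ [Nonempty V] (G : SimpleGraph V) :
    ¬ CutPointProperty G Set.univ := fun h => by
  have := h (Classical.arbitrary V) (Set.mem_univ _)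
  simp [nc_singleton, nc_empty] at this

end ComponentCount

lemma compl_subset_range_inl_of_range_inr_subset {V₁ V₂ : Type*} {T : Set (V₁ ⊕ V₂)}
    (hT : Set.range Sum.inr ⊆ T) : Tᶜ ⊆ Set.range Sum.inl :=
  Set.compl_subset_comm.mpr (Set.compl_range_inl ▸ hT)

namespace joinGraph

variable {V₁ V₂ : Type*} (A : SimpleGraph V₁) (B : SimpleGraph V₂)

def embeddingInl : A ↪g joinGraph A B where
  toFun := Sum.inl
  inj' := Sum.inl_injective
  map_rel_iff' := Iff.rfl

def swapIso : joinGraph A B ≃g joinGraph B A where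
  toEquiv := Equiv.sumComm V₁ V₂
  map_rel_iff' := by rintro (a | a) (b | b) <;> exact Iff.rfl

variable {A B}

lemma preconnected_induce {S : Set (V₁ ⊕ V₂)} {a : V₁} {b : V₂}
    (ha : Sum.inl a ∈ S) (hb : Sum.inr b ∈ S) : ((joinGraph A B).induce S).Preconnected := by
  have hreach : ∀ x : S, ((joinGraph A B).induce S).Reachable x ⟨Sum.inr b, hb⟩ := by
    rintro ⟨c | d, hx⟩
    · exact Adj.reachable (by trivial)
    · have hda : ((joinGraph A B).induce S).Adj ⟨Sum.inr d, hx⟩ ⟨Sum.inl a, ha⟩ := by trivial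
      have hab : ((joinGraph A B).induce S).Adj ⟨Sum.inl a, ha⟩ ⟨Sum.inr b, hb⟩ := by trivial
      exact hda.reachable.trans hab.reachable
  exact fun x y => (hreach x).trans (hreach y).symm

lemma nc_of_subset_range_inl {S : Set (V₁ ⊕ V₂)} (hS : S ⊆ Set.range Sum.inl) :
    nc (joinGraph A B) S = nc A (Sum.inl ⁻¹' S) := by
  rw [← nc_image_embedding (embeddingInl A B)]
  exact congrArg _ (Set.image_preimage_eq_of_subset hS).symm

lemma range_inr_subset_or_range_inl_subset [Finite V₁] [Finite V₂] {T : Set (V₁ ⊕ V₂)}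
    (hT : T.Nonempty) (h : CutPointProperty (joinGraph A B) T) :
    Set.range Sum.inr ⊆ T ∨ Set.range Sum.inl ⊆ T := by
  by_contra! hcon
  obtain ⟨⟨_, ⟨b, rfl⟩, hb⟩, ⟨_, ⟨a, rfl⟩, ha⟩⟩ := hcon.imp Set.not_subset.mp Set.not_subset.mp
  obtain ⟨x, hx⟩ := hT
  have hlt := h x hx
  have hle : nc (joinGraph A B) Tᶜ ≤ 1 := nc_le_one (preconnected_induce ha hb)
  have hge : 1 ≤ nc (joinGraph A B) (Tᶜ ∪ {x}) := one_le_nc ⟨x, Or.inr rfl⟩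
  omega

lemma compl_union_inl_lt_iff {T : Set (V₁ ⊕ V₂)} (hT : Set.range Sum.inr ⊆ T) (a : V₁) :
    nc (joinGraph A B) (Tᶜ ∪ {Sum.inl a}) < nc (joinGraph A B) Tᶜ ↔
      nc A ((Sum.inl ⁻¹' T)ᶜ ∪ {a}) < nc A (Sum.inl ⁻¹' T)ᶜ := by
  have hTc := compl_subset_range_inl_of_range_inr_subset hT
  rw [nc_of_subset_range_inl hTc, nc_of_subset_range_inl (Set.union_subset hTc (by simp)),
    Set.preimage_union, Set.preimage_compl, ← Set.image_singleton,
    Sum.inl_injective.preimage_image]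

lemma cutPointProperty_preimage_inl {T : Set (V₁ ⊕ V₂)} (hT : Set.range Sum.inr ⊆ T)
    (h : CutPointProperty (joinGraph A B) T) : CutPointProperty A (Sum.inl ⁻¹' T) :=
  fun a ha => (compl_union_inl_lt_iff hT a).mp (h _ ha)

lemma cutPointProperty_of_preimage_inl {T : Set (V₁ ⊕ V₂)} (hT : Set.range Sum.inr ⊆ T)
    (hA : CutPointProperty A (Sum.inl ⁻¹' T)) (hcompl : 1 < nc A (Sum.inl ⁻¹' T)ᶜ) :
    CutPointProperty (joinGraph A B) T := by
  have hTc := compl_subset_range_inl_of_range_inr_subset hT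
  rintro (a | w) hx
  · exact (compl_union_inl_lt_iff hT a).mpr (hA a hx)
  · have hstar : ∀ u ∈ Tᶜ ∪ {Sum.inr w}, u ≠ Sum.inr w → (joinGraph A B).Adj u (Sum.inr w) := by
      rintro u (hu | rfl) hne
      · obtain ⟨c, rfl⟩ := hTc hu
        trivial
      · exact absurd rfl hne
    have hle := nc_le_one (preconnected_induce_of_forall_adj (by simp) hstar)
    rw [nc_of_subset_range_inl hTc, Set.preimage_compl]
    omega

end joinGraph

namespace sigmaGraph

variable {ι : Type*} {V : ι → Type*} (G : ∀ i, SimpleGraph (V i))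

def homMk (i : ι) : G i →g sigmaGraph G where
  toFun := Sigma.mk i
  map_rel' h := ⟨rfl, h⟩

def induceIso (S : Set (Σ i, V i)) :
    (sigmaGraph G).induce S ≃g sigmaGraph (fun i => (G i).induce (Sigma.mk i ⁻¹' S)) where
  toFun x := ⟨x.1.1, x.1.2, x.2⟩
  invFun x := ⟨⟨x.1, x.2.1⟩, x.2.2⟩
  map_rel_iff' := by
    rintro ⟨⟨i, v⟩, hv⟩ ⟨⟨j, w⟩, hw⟩
    constructor <;> rintro ⟨h, hadj⟩ <;> obtain rfl : i = j := h <;> exact ⟨rfl, hadj⟩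

def connectedComponentEquiv :
    (Σ i, (G i).ConnectedComponent) ≃ (sigmaGraph G).ConnectedComponent where
  toFun c := c.2.map (homMk G c.1)
  invFun := ConnectedComponent.lift (fun x => ⟨x.1, (G x.1).connectedComponentMk x.2⟩) <| by
    intro x y p _
    have hstep : (sigmaGraph G).Adj ≤ Function.onFun Eq fun x : Σ i, V i =>
        (⟨x.1, (G x.1).connectedComponentMk x.2⟩ : Σ i, (G i).ConnectedComponent) := by
      rintro ⟨i, a⟩ ⟨j, b⟩ ⟨h, hab⟩
      obtain rfl : i = j := h
      exact congrArg (Sigma.mk i) (ConnectedComponent.sound hab.reachable)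
    have hreach := (reachable_iff_reflTransGen x y).mp p.reachable
    simpa [Relation.reflTransGen_eq_self] using hreach.lift _ hstep
  left_inv := by
    rintro ⟨i, c⟩
    exact c.ind fun v => rfl
  right_inv := ConnectedComponent.ind fun _ => rfl

lemma nc_eq_sum [Fintype ι] [∀ i, Finite (V i)] (S : Set (Σ i, V i)) :
    nc (sigmaGraph G) S = ∑ i, nc (G i) (Sigma.mk i ⁻¹' S) := by
  rw [nc, Nat.card_congr (induceIso G S).connectedComponentEquiv,
    ← Nat.card_congr (connectedComponentEquiv _), Nat.card_sigma]
  rfl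

lemma cutPointProperty_iff [Fintype ι] [∀ i, Finite (V i)] (T : Set (Σ i, V i)) :
    CutPointProperty (sigmaGraph G) T ↔ ∀ i, CutPointProperty (G i) (Sigma.mk i ⁻¹' T) := by
  classical
  have hlt (k : ι) (v : V k) :
      nc (sigmaGraph G) (Tᶜ ∪ {⟨k, v⟩}) < nc (sigmaGraph G) Tᶜ ↔
        nc (G k) ((Sigma.mk k ⁻¹' T)ᶜ ∪ {v}) < nc (G k) (Sigma.mk k ⁻¹' T)ᶜ := by
    have hfiber : Sigma.mk k ⁻¹' (Tᶜ ∪ {⟨k, v⟩}) = (Sigma.mk k ⁻¹' T)ᶜ ∪ {v} := by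
      ext; simp
    have hrest : ∑ i ∈ Finset.univ.erase k, nc (G i) (Sigma.mk i ⁻¹' (Tᶜ ∪ {⟨k, v⟩})) =
        ∑ i ∈ Finset.univ.erase k, nc (G i) (Sigma.mk i ⁻¹' Tᶜ) :=
      Finset.sum_congr rfl fun i hi => by
        congr 1
        ext
        simp [Finset.ne_of_mem_erase hi]
    rw [nc_eq_sum, nc_eq_sum, ← Finset.add_sum_erase _ _ (Finset.mem_univ k),
      ← Finset.add_sum_erase _ _ (Finset.mem_univ k), hfiber, hrest, Set.preimage_compl]
    omega
  simp only [CutPointProperty, Sigma.forall, Set.mem_preimage, hlt]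

lemma card_le_nc_compl [Fintype ι] [∀ i, Finite (V i)] [∀ i, Nonempty (V i)]
    {T : Set (Σ i, V i)} (h : ∀ i, CutPointProperty (G i) (Sigma.mk i ⁻¹' T)) :
    Fintype.card ι ≤ nc (sigmaGraph G) Tᶜ := by
  have hfiber (i : ι) : (Sigma.mk i ⁻¹' Tᶜ).Nonempty :=
    Set.nonempty_compl.mpr fun huniv => not_cutPointProperty_univ (G i) (huniv ▸ h i)
  rw [nc_eq_sum]
  calc Fintype.card ι = ∑ _ : ι, 1 := by simp
    _ ≤ _ := Finset.sum_le_sum fun i _ => one_le_nc (hfiber i)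

end sigmaGraph

lemma cutPointProperty_joinGraph_sigmaGraph_iff {ι N : Type*} [Fintype ι] {V : ι → Type*}
    [∀ i, Finite (V i)] [∀ i, Nonempty (V i)] (hι : 2 ≤ Fintype.card ι)
    (G : ∀ i, SimpleGraph (V i)) (H : SimpleGraph N) {T : Set ((Σ i, V i) ⊕ N)}
    (hT : Set.range Sum.inr ⊆ T) :
    CutPointProperty (joinGraph (sigmaGraph G) H) T ↔
      ∀ i, CutPointProperty (G i) (Sigma.mk i ⁻¹' (Sum.inl ⁻¹' T)) := by
  rw [← sigmaGraph.cutPointProperty_iff]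
  refine ⟨joinGraph.cutPointProperty_preimage_inl hT, fun h => ?_⟩
  have hcard := sigmaGraph.card_le_nc_compl G ((sigmaGraph.cutPointProperty_iff G _).mp h)
  exact joinGraph.cutPointProperty_of_preimage_inl hT h (by omega)

section

variable {ι N : Type*} {V : ι → Type*} {P : ∀ i, Set (V i) → Prop}

lemma exists_eq_range_inr_union_image_iff {T : Set ((Σ i, V i) ⊕ N)} :
    (∃ T₁ : ∀ i, Set (V i), (∀ i, P i (T₁ i)) ∧
        T = Set.range Sum.inr ∪ Sum.inl '' {x : Σ i, V i | x.2 ∈ T₁ x.1}) ↔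
      Set.range Sum.inr ⊆ T ∧ ∀ i, P i (Sigma.mk i ⁻¹' (Sum.inl ⁻¹' T)) := by
  constructor
  · rintro ⟨T₁, hP, rfl⟩
    refine ⟨Set.subset_union_left, fun i => ?_⟩
    convert hP i using 1
    ext
    simp
  · rintro ⟨hT, hP⟩
    refine ⟨_, hP, ?_⟩
    ext (x | x)
    · simp
    · simpa using hT ⟨x, rfl⟩

lemma exists_eq_range_inl_union_image_iff {T : Set (N ⊕ Σ i, V i)} :
    (∃ T₂ : ∀ i, Set (V i), (∀ i, P i (T₂ i)) ∧
        T = Set.range Sum.inl ∪ Sum.inr '' {x : Σ i, V i | x.2 ∈ T₂ x.1}) ↔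
      Set.range Sum.inl ⊆ T ∧ ∀ i, P i (Sigma.mk i ⁻¹' (Sum.inr ⁻¹' T)) := by
  constructor
  · rintro ⟨T₂, hP, rfl⟩
    refine ⟨Set.subset_union_left, fun i => ?_⟩
    convert hP i using 1
    ext
    simp
  · rintro ⟨hT, hP⟩
    refine ⟨_, hP, ?_⟩
    ext (x | x)
    · simpa using hT ⟨x, rfl⟩
    · simp

end

/-- the nonempty sets with the cut point property for the join of two disjoint
unions of connected graphs (`r, s ≥ 2`). -/
theorem stmt3 {r s : ℕ} (hr : 2 ≤ r) (hs : 2 ≤ s)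
    {V : Fin r → Type*} {W : Fin s → Type*}
    [∀ i, Fintype (V i)] [∀ j, Fintype (W j)]
    (G₁ : ∀ i, SimpleGraph (V i)) (G₂ : ∀ j, SimpleGraph (W j))
    (hG₁ : ∀ i, (G₁ i).Connected) (hG₂ : ∀ j, (G₂ j).Connected)
    (T : Set ((Σ i, V i) ⊕ (Σ j, W j))) (hT : T.Nonempty) :
    CutPointProperty (joinGraph (sigmaGraph G₁) (sigmaGraph G₂)) T ↔
      (∃ T₁ : ∀ i, Set (V i), (∀ i, CutPointProperty (G₁ i) (T₁ i)) ∧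
        T = Set.range Sum.inr ∪ Sum.inl '' {x : Σ i, V i | x.2 ∈ T₁ x.1}) ∨
      (∃ T₂ : ∀ j, Set (W j), (∀ j, CutPointProperty (G₂ j) (T₂ j)) ∧
        T = Set.range Sum.inl ∪ Sum.inr '' {x : Σ j, W j | x.2 ∈ T₂ x.1}) := by
  have := fun i => (hG₁ i).nonempty
  have := fun j => (hG₂ j).nonempty
  have key₁ (hT₁ : Set.range Sum.inr ⊆ T) := cutPointProperty_joinGraph_sigmaGraph_iff
    (by simpa using hr) G₁ (sigmaGraph G₂) hT₁
  have key₂ (hT₂ : Set.range Sum.inl ⊆ T) :=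
    (cutPointProperty_preimage_iso_iff (joinGraph.swapIso _ _) T).symm.trans <|
      cutPointProperty_joinGraph_sigmaGraph_iff (by simpa using hs) G₂ (sigmaGraph G₁)
        (T := Sum.swap ⁻¹' T) (Set.range_subset_iff.mpr fun a => hT₂ ⟨a, rfl⟩)
  rw [exists_eq_range_inr_union_image_iff, exists_eq_range_inl_union_image_iff]
  constructor
  · intro h
    rcases joinGraph.range_inr_subset_or_range_inl_subset hT h with hT₁ | hT₂
    exacts [Or.inl ⟨hT₁, (key₁ hT₁).mp h⟩, Or.inr ⟨hT₂, (key₂ hT₂).mp h⟩]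
  · rintro (⟨hT₁, h⟩ | ⟨hT₂, h⟩)
    exacts [(key₁ hT₁).mpr h, (key₂ hT₂).mpr h]
end

section
/- Let $H$ and $H'$ be connected graphs on disjoint vertex sets $[n_1]$ and $[n_2]$. A nonempty subset $T'$ of the vertices of the corona $H \odot H'$ has the cut point property if and only if $T' = T \cup \bigcup_{v \in T} T_v$, where $\emptyset \neq T \subseteq [n_1]$, each $T_v \in \mathcal{C}(H'_v)$ (the copy of $H'$ attached to $v$), and for every $v \in T$ with $N_H(v) \subseteq T$ one has $T_v \neq \emptyset$. -/
open SimpleGraph Set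

/-!
Deleting a vertex set from `H ⊙ H'`, the components of what is left are those of its trace on `H`
together with, for every deleted base vertex `v`, those of its trace on the copy `H'_v`: a
surviving base vertex absorbs its whole copy. So putting a copy vertex `(v, w)` back changes the
count only if `v` was deleted, and then exactly as in `H'_v`; this is the cut point condition
for `T_v`. Putting a base vertex `v` back adds the change of the count in `H` and removes the
`nc_{H'}(T_vᶜ)` components of its copy. That is a decrease when `T_v ≠ ∅`, since then
`T_vᶜ` has at least two components; when `T_v = ∅` it is one component (`H'` is connected),
so `v` must join an existing component of `H - T`, i.e. have a neighbour outside `T`.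
-/

namespace SimpleGraph

variable {V : Type*} {G : SimpleGraph V}

lemma Reachable.eq_of_forall_adj {β : Sort*} {f : V → β} (h : ∀ v w, G.Adj v w → f v = f w)
    {v w : V} (hvw : G.Reachable v w) : f v = f w := by
  obtain ⟨p⟩ := hvw
  induction p with
  | nil => rfl
  | cons hadj _ ih => exact (h _ _ hadj).trans ih

variable (G) in
def insertComponentMap (v : V) (s : Set V) :
    Option (G.induce s).ConnectedComponent → (G.induce (insert v s)).ConnectedComponent :=
  fun c => c.elim ((G.induce _).connectedComponentMk ⟨v, mem_insert v s⟩)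
    (ConnectedComponent.map (G.induceHomOfLE (subset_insert v s)).toHom)

lemma insertComponentMap_surjective (v : V) (s : Set V) :
    Function.Surjective (G.insertComponentMap v s) := by
  refine ConnectedComponent.ind fun ⟨x, hx⟩ => ?_
  rcases hx with rfl | hx
  · exact ⟨none, rfl⟩
  · exact ⟨some ((G.induce s).connectedComponentMk ⟨x, hx⟩), rfl⟩

end SimpleGraph

section ComponentCount

lemma nc_univ_of_connected {V : Type*} {G : SimpleGraph V} (hG : G.Connected) :
    nc G univ = 1 := by
  have hind : (G.induce univ).Connected := (induceUnivIso G).symm.connected_iff.mp hG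
  exact Nat.card_eq_one_iff_unique.mpr ⟨hind.preconnected.subsingleton_connectedComponent,
    ⟨(G.induce univ).connectedComponentMk hind.nonempty.some⟩⟩

variable {V : Type*} [Finite V] {G : SimpleGraph V}

lemma nc_insert_le (v : V) (s : Set V) : nc G (insert v s) ≤ nc G s + 1 := by
  rw [nc, nc, ← Finite.card_option]
  exact Nat.card_le_card_of_surjective _ (G.insertComponentMap_surjective v s)

lemma nc_insert_le_of_adj {v u : V} {s : Set V} (hu : u ∈ s) (hvu : G.Adj v u) :
    nc G (insert v s) ≤ nc G s := by
  refine Nat.card_le_card_of_surjective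
    (ConnectedComponent.map (G.induceHomOfLE (subset_insert v s)).toHom) ?_
  refine ConnectedComponent.ind fun ⟨x, hx⟩ => ?_
  rcases hx with rfl | hx
  · exact ⟨(G.induce s).connectedComponentMk ⟨u, hu⟩,
      ConnectedComponent.connectedComponentMk_eq_of_adj (show G.Adj u x from hvu.symm)⟩
  · exact ⟨(G.induce s).connectedComponentMk ⟨x, hx⟩, rfl⟩

lemma nc_insert_of_forall_not_adj {v : V} {s : Set V} (hvs : v ∉ s)
    (hv : ∀ u ∈ s, ¬ G.Adj v u) : nc G (insert v s) = nc G s + 1 := by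
  classical
  -- `v` is isolated in `G[insert v s]`: retract its components onto `Option` of those of `G[s]`.
  let f : ↥(insert v s) → Option (G.induce s).ConnectedComponent :=
    fun x => if hx : x.1 ∈ s then some ((G.induce s).connectedComponentMk ⟨x, hx⟩) else none
  have hf : ∀ x y, (G.induce (insert v s)).Adj x y → f x = f y := by
    rintro ⟨x, rfl | hx⟩ ⟨y, rfl | hy⟩ hxy
    · exact absurd hxy G.irrefl
    · exact absurd hxy (hv y hy)
    · exact absurd hxy.symm (hv x hx)
    · simpa [f, hx, hy] using ConnectedComponent.connectedComponentMk_eq_of_adj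
        (show (G.induce s).Adj ⟨x, hx⟩ ⟨y, hy⟩ from hxy)
  let r := ConnectedComponent.lift f fun _ _ p _ => Reachable.eq_of_forall_adj hf ⟨p⟩
  have hinj : Function.Injective (G.insertComponentMap v s) :=
    Function.LeftInverse.injective (g := r) <| by
      rintro (_ | c)
      · simp [insertComponentMap, r, f, hvs]
      · induction c using ConnectedComponent.ind with
        | h x => exact dif_pos x.2
  rw [nc, nc, ← Finite.card_option]
  exact (Nat.card_eq_of_bijective _ ⟨hinj, G.insertComponentMap_surjective v s⟩).symm

lemma nc_pos {s : Set V} (hs : s.Nonempty) : 0 < nc G s :=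
  have : Nonempty (G.induce s).ConnectedComponent :=
    ⟨(G.induce s).connectedComponentMk ⟨_, hs.some_mem⟩⟩
  Nat.card_pos

lemma one_lt_nc_compl_of_cutPointProperty {A : Set V} (hA : CutPointProperty G A) {w : V}
    (hw : w ∈ A) : 1 < nc G Aᶜ :=
  Nat.lt_of_le_of_lt (nc_pos ⟨w, Or.inr (mem_singleton w)⟩) (hA w hw)

end ComponentCount

section Corona

variable {V₁ V₂ : Type*} {H : SimpleGraph V₁} {H' : SimpleGraph V₂}

/-- The trace of `S` on the copy `H'_v` (the set `T_v` when `S = T'`). -/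
def coronaFiber (S : Set (V₁ ⊕ V₁ × V₂)) (v : V₁) : Set V₂ := {w | Sum.inr (v, w) ∈ S}

lemma coronaFiber_compl (S : Set (V₁ ⊕ V₁ × V₂)) (v : V₁) :
    coronaFiber Sᶜ v = (coronaFiber S v)ᶜ :=
  rfl

variable (H H') (S : Set (V₁ ⊕ V₁ × V₂))

def coronaBaseHom : H.induce (Sum.inl ⁻¹' S) →g (coronaGraph H H').induce S where
  toFun x := ⟨Sum.inl x, x.2⟩
  map_rel' h := h

def coronaFiberHom (v : V₁) : H'.induce (coronaFiber S v) →g (coronaGraph H H').induce S where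
  toFun w := ⟨Sum.inr (v, w), w.2⟩
  map_rel' h := ⟨rfl, h⟩

open Classical in
noncomputable def coronaComponentOf : S →
    (H.induce (Sum.inl ⁻¹' S)).ConnectedComponent ⊕
      Σ v : {v // Sum.inl v ∉ S}, (H'.induce (coronaFiber S v)).ConnectedComponent
  | ⟨Sum.inl v, h⟩ => .inl ((H.induce _).connectedComponentMk ⟨v, h⟩)
  | ⟨Sum.inr (v, w), h⟩ =>
    if hv : Sum.inl v ∈ S then .inl ((H.induce _).connectedComponentMk ⟨v, hv⟩)
    else .inr ⟨⟨v, hv⟩, (H'.induce _).connectedComponentMk ⟨w, h⟩⟩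

variable {H H' S}

lemma coronaComponentOf_inr_of_mem {v : V₁} {w : V₂} (h : Sum.inr (v, w) ∈ S)
    (hv : Sum.inl v ∈ S) :
    coronaComponentOf H H' S ⟨_, h⟩ = .inl ((H.induce _).connectedComponentMk ⟨v, hv⟩) :=
  dif_pos hv

lemma coronaComponentOf_inr_of_notMem {v : V₁} {w : V₂} (h : Sum.inr (v, w) ∈ S)
    (hv : Sum.inl v ∉ S) :
    coronaComponentOf H H' S ⟨_, h⟩ = .inr ⟨⟨v, hv⟩, (H'.induce _).connectedComponentMk ⟨w, h⟩⟩ :=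
  dif_neg hv

lemma coronaComponentOf_eq_of_adj {x y : S} (hxy : ((coronaGraph H H').induce S).Adj x y) :
    coronaComponentOf H H' S x = coronaComponentOf H H' S y := by
  rcases x with ⟨a | ⟨a, w⟩, hx⟩ <;> rcases y with ⟨b | ⟨b, w'⟩, hy⟩
  · exact congrArg Sum.inl (ConnectedComponent.connectedComponentMk_eq_of_adj hxy)
  · obtain rfl : a = b := hxy
    simp [coronaComponentOf, hx]
  · obtain rfl : a = b := hxy
    simp [coronaComponentOf, hy]
  · obtain ⟨rfl, hww'⟩ : a = b ∧ H'.Adj w w' := hxy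
    by_cases ha : Sum.inl a ∈ S
    · simp [coronaComponentOf, ha]
    · simpa [coronaComponentOf, ha] using ConnectedComponent.connectedComponentMk_eq_of_adj
        (show (H'.induce (coronaFiber S a)).Adj ⟨w, hx⟩ ⟨w', hy⟩ from hww')

variable (H H' S)

noncomputable def coronaComponentEquiv : ((coronaGraph H H').induce S).ConnectedComponent ≃
    (H.induce (Sum.inl ⁻¹' S)).ConnectedComponent ⊕
      Σ v : {v // Sum.inl v ∉ S}, (H'.induce (coronaFiber S v)).ConnectedComponent where
  toFun := ConnectedComponent.lift (coronaComponentOf H H' S) fun _ _ p _ =>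
    Reachable.eq_of_forall_adj (fun _ _ => coronaComponentOf_eq_of_adj) ⟨p⟩
  invFun := Sum.elim (ConnectedComponent.map (coronaBaseHom H H' S))
    fun c => ConnectedComponent.map (coronaFiberHom H H' S c.1) c.2
  left_inv := by
    refine ConnectedComponent.ind fun ⟨x, hx⟩ => ?_
    rcases x with a | ⟨a, w⟩
    · rfl
    by_cases ha : Sum.inl a ∈ S
    · show Sum.elim _ _ (coronaComponentOf H H' S ⟨_, hx⟩) = _
      rw [coronaComponentOf_inr_of_mem hx ha]
      exact ConnectedComponent.connectedComponentMk_eq_of_adj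
        (show ((coronaGraph H H').induce S).Adj ⟨Sum.inl a, ha⟩ ⟨Sum.inr (a, w), hx⟩ from rfl)
    · show Sum.elim _ _ (coronaComponentOf H H' S ⟨_, hx⟩) = _
      rw [coronaComponentOf_inr_of_notMem hx ha]
      rfl
  right_inv := by
    rintro (c | ⟨v, c⟩) <;> induction c using ConnectedComponent.ind
    · rfl
    · exact coronaComponentOf_inr_of_notMem _ v.2

lemma nc_coronaGraph [Fintype V₁] [Finite V₂] [DecidablePred (Sum.inl · ∉ S)] :
    nc (coronaGraph H H') S =
      nc H (Sum.inl ⁻¹' S) + ∑ v with Sum.inl v ∉ S, nc H' (coronaFiber S v) := by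
  rw [nc, Nat.card_congr (coronaComponentEquiv H H' S), Nat.card_sum, Nat.card_sigma]
  exact congrArg _ (Finset.sum_subtype _ (fun v => by simp) fun v => nc H' (coronaFiber S v)).symm

end Corona

section CoronaCount

variable {V₁ V₂ : Type*} [Fintype V₁] [Finite V₂] {H : SimpleGraph V₁} {H' : SimpleGraph V₂}
  {S : Set (V₁ ⊕ V₁ × V₂)} {v : V₁}

lemma nc_coronaGraph_insert_inl (hv : Sum.inl v ∉ S) :
    nc (coronaGraph H H') (insert (Sum.inl v) S) + nc H (Sum.inl ⁻¹' S) +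
        nc H' (coronaFiber S v) =
      nc (coronaGraph H H') S + nc H (insert v (Sum.inl ⁻¹' S)) := by
  classical
  have hbase : Sum.inl ⁻¹' insert (Sum.inl v) S = insert v (Sum.inl ⁻¹' S) := by
    ext; simp
  have hfiber : ∀ u, coronaFiber (insert (Sum.inl v) S) u = coronaFiber S u := fun u => by
    ext; simp [coronaFiber]
  have hindex : ({u | Sum.inl u ∉ insert (Sum.inl v) S} : Finset V₁) =
      ({u | Sum.inl u ∉ S} : Finset V₁).erase v := by
    ext; simp
  have hv' : v ∈ ({u | Sum.inl u ∉ S} : Finset V₁) := by simpa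
  rw [nc_coronaGraph, nc_coronaGraph, hbase, hindex, ← Finset.add_sum_erase _ _ hv']
  simp only [hfiber]
  ring

lemma nc_coronaGraph_insert_inr (hv : Sum.inl v ∉ S) (w : V₂) :
    nc (coronaGraph H H') (insert (Sum.inr (v, w)) S) + nc H' (coronaFiber S v) =
      nc (coronaGraph H H') S + nc H' (insert w (coronaFiber S v)) := by
  classical
  have hbase : Sum.inl ⁻¹' insert (Sum.inr (v, w)) S = Sum.inl ⁻¹' S := by
    ext; simp
  have hfiber : ∀ u ≠ v, coronaFiber (insert (Sum.inr (v, w)) S) u = coronaFiber S u :=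
    fun u hu => by ext; simp [coronaFiber, hu]
  have hindex : ({u | Sum.inl u ∉ insert (Sum.inr (v, w)) S} : Finset V₁) =
      ({u | Sum.inl u ∉ S} : Finset V₁) := by
    ext; simp
  have hv' : v ∈ ({u | Sum.inl u ∉ S} : Finset V₁) := by simpa
  rw [nc_coronaGraph, nc_coronaGraph, hbase, hindex, ← Finset.add_sum_erase _ _ hv',
    ← Finset.add_sum_erase _ _ hv',
    Finset.sum_congr rfl fun u hu => by rw [hfiber u (Finset.ne_of_mem_erase hu)]]
  have : coronaFiber (insert (Sum.inr (v, w)) S) v = insert w (coronaFiber S v) := by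
    ext; simp [coronaFiber]
  rw [this]
  ring

lemma nc_coronaGraph_insert_inr_of_mem (hv : Sum.inl v ∈ S) (w : V₂) :
    nc (coronaGraph H H') (insert (Sum.inr (v, w)) S) = nc (coronaGraph H H') S := by
  classical
  have hbase : Sum.inl ⁻¹' insert (Sum.inr (v, w)) S = Sum.inl ⁻¹' S := by
    ext; simp
  have hindex : ({u | Sum.inl u ∉ insert (Sum.inr (v, w)) S} : Finset V₁) =
      ({u | Sum.inl u ∉ S} : Finset V₁) := by
    ext; simp
  rw [nc_coronaGraph, nc_coronaGraph, hbase, hindex]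
  refine congrArg _ (Finset.sum_congr rfl fun u hu => ?_)
  have hu : u ≠ v := by rintro rfl; simp_all
  congr 1; ext; simp [coronaFiber, hu]

end CoronaCount

lemma nc_insert_lt_add_nc_compl_iff {V W : Type*} [Finite V] [Finite W] {G : SimpleGraph V}
    {G' : SimpleGraph W} (hG' : G'.Connected) {A : Set W} (hA : CutPointProperty G' A)
    {T : Set V} {v : V} (hv : v ∈ T) :
    nc G (insert v Tᶜ) < nc G Tᶜ + nc G' Aᶜ ↔ (G.neighborSet v ⊆ T → A.Nonempty) := by
  rcases A.eq_empty_or_nonempty with rfl | ⟨w, hw⟩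
  · rw [compl_empty, nc_univ_of_connected hG']
    simp only [Set.not_nonempty_empty, imp_false]
    constructor
    · intro hlt hsub
      have := nc_insert_of_forall_not_adj (G := G) (s := Tᶜ) (not_not.2 hv)
        fun u hu hvu => hu (hsub hvu)
      omega
    · intro hnsub
      obtain ⟨u, hvu, hu⟩ := not_subset.1 hnsub
      have := nc_insert_le_of_adj (s := Tᶜ) hu hvu
      omega
  · have := nc_insert_le (G := G) v Tᶜ
    have := one_lt_nc_compl_of_cutPointProperty hA hw
    exact iff_of_true (by omega) fun _ => ⟨w, hw⟩

section CoronaCutPoint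

variable {V₁ V₂ : Type*} [Fintype V₁] [Finite V₂] {H : SimpleGraph V₁} {H' : SimpleGraph V₂}

theorem cutPointProperty_coronaGraph_iff (hH' : H'.Connected) (T' : Set (V₁ ⊕ V₁ × V₂)) :
    CutPointProperty (coronaGraph H H') T' ↔
      (∀ p : V₁ × V₂, Sum.inr p ∈ T' → Sum.inl p.1 ∈ T') ∧
      ∀ v, Sum.inl v ∈ T' → CutPointProperty H' (coronaFiber T' v) ∧
        (H.neighborSet v ⊆ Sum.inl ⁻¹' T' → (coronaFiber T' v).Nonempty) := by
  have hinl : ∀ v, Sum.inl v ∈ T' →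
      (nc (coronaGraph H H') (T'ᶜ ∪ {Sum.inl v}) < nc (coronaGraph H H') T'ᶜ ↔
        nc H (insert v (Sum.inl ⁻¹' T')ᶜ) < nc H (Sum.inl ⁻¹' T')ᶜ + nc H' (coronaFiber T' v)ᶜ) :=
    fun v hv => by
      have := nc_coronaGraph_insert_inl (H := H) (H' := H') (S := T'ᶜ) (not_not.2 hv)
      rw [preimage_compl, coronaFiber_compl] at this
      rw [union_singleton]
      exact ⟨fun h => by omega, fun h => by omega⟩
  have hinr : ∀ v w, Sum.inl v ∈ T' →
      (nc (coronaGraph H H') (T'ᶜ ∪ {Sum.inr (v, w)}) < nc (coronaGraph H H') T'ᶜ ↔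
        nc H' ((coronaFiber T' v)ᶜ ∪ {w}) < nc H' (coronaFiber T' v)ᶜ) := fun v w hv => by
    have := nc_coronaGraph_insert_inr (H := H) (H' := H') (S := T'ᶜ) (not_not.2 hv) w
    rw [coronaFiber_compl] at this
    rw [union_singleton, union_singleton]
    exact ⟨fun h => by omega, fun h => by omega⟩
  constructor
  · intro h
    have hclosed : ∀ p : V₁ × V₂, Sum.inr p ∈ T' → Sum.inl p.1 ∈ T' := fun ⟨v, w⟩ hp => by
      by_contra hv
      have hlt := h _ hp
      rw [union_singleton, nc_coronaGraph_insert_inr_of_mem hv] at hlt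
      exact lt_irrefl _ hlt
    refine ⟨hclosed, fun v hv => ?_⟩
    have hcpp : CutPointProperty H' (coronaFiber T' v) := fun w hw => (hinr v w hv).1 (h _ hw)
    exact ⟨hcpp, (nc_insert_lt_add_nc_compl_iff (G := H) hH' hcpp hv).1 ((hinl v hv).1 (h _ hv))⟩
  · rintro ⟨hclosed, hT⟩ (v | ⟨v, w⟩) hi
    · exact (hinl v hi).2
        ((nc_insert_lt_add_nc_compl_iff (G := H) hH' (hT v hi).1 hi).2 (hT v hi).2)
    · exact (hinr v w (hclosed _ hi)).2 ((hT v (hclosed _ hi)).1 w hi)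

end CoronaCutPoint

theorem stmt4_general {V₁ V₂ : Type*} [Fintype V₁] [Fintype V₂]
    (H : SimpleGraph V₁) (H' : SimpleGraph V₂)
    (hH' : H'.Connected)
    (T' : Set (V₁ ⊕ V₁ × V₂)) (hT' : T'.Nonempty) :
    CutPointProperty (coronaGraph H H') T' ↔
      ∃ (T : Set V₁) (Tv : V₁ → Set V₂), T.Nonempty ∧
        (∀ v ∈ T, CutPointProperty H' (Tv v)) ∧
        (∀ v ∈ T, H.neighborSet v ⊆ T → (Tv v).Nonempty) ∧
        T' = Sum.inl '' T ∪ Sum.inr '' {p : V₁ × V₂ | p.1 ∈ T ∧ p.2 ∈ Tv p.1} := by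
  rw [cutPointProperty_coronaGraph_iff hH']
  constructor
  · rintro ⟨hclosed, hT⟩
    refine ⟨Sum.inl ⁻¹' T', coronaFiber T', ?_, fun v hv => (hT v hv).1,
      fun v hv => (hT v hv).2, ?_⟩
    · obtain ⟨v | p, hx⟩ := hT'
      exacts [⟨v, hx⟩, ⟨p.1, hclosed p hx⟩]
    · ext (v | p)
      · simp
      · simpa [coronaFiber] using fun h => hclosed p h
  · rintro ⟨T, Tv, -, hcpp, hnb, rfl⟩
    have hbase : Sum.inl ⁻¹' (Sum.inl '' T ∪ Sum.inr '' {p : V₁ × V₂ | p.1 ∈ T ∧ p.2 ∈ Tv p.1})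
        = T := by
      ext; simp
    refine ⟨fun p hp => by simp_all, fun v hv => ?_⟩
    replace hv : v ∈ T := by simpa using hv
    have hfiber : coronaFiber (Sum.inl '' T ∪ Sum.inr '' {p : V₁ × V₂ | p.1 ∈ T ∧ p.2 ∈ Tv p.1}) v
        = Tv v := by
      ext; simp [coronaFiber, hv]
    rw [hbase, hfiber]
    exact ⟨hcpp v hv, hnb v hv⟩

/-- the nonempty sets with the cut point property for the corona `H ⊙ H'`
of two connected graphs. -/
theorem stmt4 {V₁ V₂ : Type*} [Fintype V₁] [Fintype V₂]
    (H : SimpleGraph V₁) (H' : SimpleGraph V₂)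
    (hH : H.Connected) (hH' : H'.Connected)
    (T' : Set (V₁ ⊕ V₁ × V₂)) (hT' : T'.Nonempty) :
    CutPointProperty (coronaGraph H H') T' ↔
      ∃ (T : Set V₁) (Tv : V₁ → Set V₂), T.Nonempty ∧
        (∀ v ∈ T, CutPointProperty H' (Tv v)) ∧
        (∀ v ∈ T, H.neighborSet v ⊆ T → (Tv v).Nonempty) ∧
        T' = Sum.inl '' T ∪ Sum.inr '' {p : V₁ × V₂ | p.1 ∈ T ∧ p.2 ∈ Tv p.1} :=
  stmt4_general H H' hH' T' hT'
end

section
/- Let $1 \leq n_1 \leq \cdots \leq n_t$ be integers and let $K_{n_1,\ldots,n_t}$ be the complete $t$-partite graph. Then the Krull dimension of $S/J_{K_{n_1,\ldots,n_t}}$, where $S = K[x_1,\ldots,x_n,y_1,\ldots,y_n]$ with $n = \sum_i n_i$ and $J_G$ is the binomial edge ideal, satisfies $\dim S/J_{K_{n_1,\ldots,n_t}} = \max\{\sum_{i=1}^t n_i + 1,\; 2 n_t\}$. Equivalently, combinatorially, $\max\{n - |T| + c(T) : T \subseteq [n]\} = \max\{n+1, 2n_t\}$, where $c(T)$ is the number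 of connected components of the induced subgraph on $[n]\setminus T$. -/
open SimpleGraph Set

/-- The complete multipartite graph on `Σ i, Fin (n i)`: vertices are adjacent iff they
lie in different parts. -/
def completeMultipartite {t : ℕ} (n : Fin t → ℕ) : SimpleGraph (Σ i, Fin (n i)) where
  Adj v w := v.1 ≠ w.1
  symm := ⟨fun _ _ h => h.symm⟩
  loopless := ⟨fun _ h => h rfl⟩

/-!
With `s = Tᶜ` the quantity is `|s| + c(s)`. If `s` meets two parts, the induced graph is
connected, so the value is at most `N + 1`, attained by `s = univ` when there are at least two
parts. Otherwise `s` is an independent set inside a single part, so `c(s) = |s|` and the value is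
at most twice the largest part, attained by that part.
-/

section ComponentCount

variable {V : Type*} (G : SimpleGraph V) (s : Set V)

lemma nc_eq_one_of_connected (h : (G.induce s).Connected) : nc G s = 1 := by
  have := h.nonempty
  rw [nc, Nat.card_eq_one_iff_unique]
  exact ⟨h.preconnected.subsingleton_connectedComponent, inferInstance⟩

lemma nc_eq_ncard_of_isIndepSet (h : G.IsIndepSet s) : nc G s = s.ncard := by
  have hbot : G.induce s = ⊥ := by
    ext u v
    simpa using fun huv => h u.2 v.2 (Subtype.coe_ne_coe.2 ((G.induce s).ne_of_adj huv)) huv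
  rw [nc, hbot, ← Nat.card_coe_set_eq]
  exact Nat.card_congr (Equiv.ofBijective (⊥ : SimpleGraph s).connectedComponentMk
    ⟨fun u v huv => reachable_bot.1 (ConnectedComponent.eq.1 huv), Quot.mk_surjective⟩).symm

end ComponentCount

namespace SimpleGraph.completeMultipartiteGraph

variable {ι : Type*} {V : ι → Type*}

lemma induce_connected {s : Set (Σ i, V i)} {a b : Σ i, V i} (ha : a ∈ s) (hb : b ∈ s)
    (hab : a.1 ≠ b.1) : ((completeMultipartiteGraph V).induce s).Connected := by
  refine (connected_iff _).2 ⟨fun u v => ?_, ⟨⟨a, ha⟩⟩⟩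
  by_cases huv : u.1.1 = v.1.1
  · obtain ⟨w, hw, hwu⟩ : ∃ w ∈ s, w.1 ≠ u.1.1 := by
      by_cases hau : a.1 = u.1.1
      · exact ⟨b, hb, fun h => hab (hau.trans h.symm)⟩
      · exact ⟨a, ha, hau⟩
    have huw : ((completeMultipartiteGraph V).induce s).Adj u ⟨w, hw⟩ := by simpa using hwu.symm
    have hwv : ((completeMultipartiteGraph V).induce s).Adj ⟨w, hw⟩ v := by
      simpa [← huv] using hwu
    exact huw.reachable.trans hwv.reachable
  · exact Adj.reachable (by simpa using huv)

lemma ncard_add_nc_range_sigmaMk (i : ι) :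
    (range (Sigma.mk i : V i → _)).ncard + nc (completeMultipartiteGraph V) (range (Sigma.mk i))
      = 2 * Nat.card (V i) := by
  rw [nc_eq_ncard_of_isIndepSet, ncard_range_of_injective sigma_mk_injective, two_mul]
  rintro _ ⟨x, rfl⟩ _ ⟨y, rfl⟩ _
  simp

lemma ncard_add_nc_univ [Finite (Σ i, V i)] {i j : ι} (hij : i ≠ j) (x : V i) (y : V j) :
    (univ : Set (Σ i, V i)).ncard + nc (completeMultipartiteGraph V) univ
      = Nat.card (Σ i, V i) + 1 := by
  rw [ncard_univ, nc_eq_one_of_connected _ _ (induce_connected (mem_univ ⟨i, x⟩)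
    (mem_univ ⟨j, y⟩) hij)]

lemma ncard_add_nc_le [Finite (Σ i, V i)] {m : ℕ} (hm : ∀ i, Nat.card (V i) ≤ m)
    (s : Set (Σ i, V i)) :
    s.ncard + nc (completeMultipartiteGraph V) s ≤ max (Nat.card (Σ i, V i) + 1) (2 * m) := by
  by_cases hs : ∃ a ∈ s, ∃ b ∈ s, a.1 ≠ b.1
  · obtain ⟨a, ha, b, hb, hab⟩ := hs
    rw [nc_eq_one_of_connected _ _ (induce_connected ha hb hab)]
    exact le_max_of_le_left (by grw [ncard_le_card s])
  · push Not at hs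
    rw [nc_eq_ncard_of_isIndepSet _ _ (fun v hv w hw _ => by simpa using hs v hv w hw)]
    rcases s.eq_empty_or_nonempty with rfl | ⟨v, hv⟩
    · simp
    · have hsub : s ⊆ range (Sigma.mk v.1) := fun w hw => by
        simpa [range_sigmaMk] using hs w hw v hv
      have := (ncard_le_ncard hsub).trans_eq (ncard_range_of_injective sigma_mk_injective)
      exact le_max_of_le_right (by grw [this, hm]; omega)

end SimpleGraph.completeMultipartiteGraph

lemma completeMultipartite_eq_completeMultipartiteGraph {t : ℕ} (n : Fin t → ℕ) :
    completeMultipartite n = completeMultipartiteGraph (fun i => Fin (n i)) :=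
  rfl

open SimpleGraph.completeMultipartiteGraph in
/-- combinatorial form: for `1 ≤ n 0 ≤ ⋯ ≤ n t`, the maximum of
`N - |T| + c(T)` over all vertex subsets `T` of the complete multipartite graph equals
`max (N + 1) (2 * n (Fin.last t))`, where `N = ∑ i, n i`. -/
theorem stmt18 {t : ℕ} (n : Fin (t + 1) → ℕ) (hmono : Monotone n)
    (hpos : ∀ i, 1 ≤ n i) :
    IsGreatest
      {k : ℕ | ∃ T : Set (Σ i, Fin (n i)),
        k = (∑ i, n i) - T.ncard + nc (completeMultipartite n) Tᶜ}
      (max ((∑ i, n i) + 1) (2 * n (Fin.last t))) := by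
  have hcard : Nat.card (Σ i, Fin (n i)) = ∑ i, n i := by simp
  have hcompl (T : Set (Σ i, Fin (n i))) : Nat.card (Σ i, Fin (n i)) - T.ncard = Tᶜ.ncard :=
    (ncard_compl T).symm
  simp only [completeMultipartite_eq_completeMultipartiteGraph, ← hcard, hcompl]
  set N := Nat.card (Σ i, Fin (n i))
  refine ⟨?_, ?_⟩
  · obtain ⟨s, hs⟩ : ∃ s : Set (Σ i, Fin (n i)),
        s.ncard + nc (completeMultipartiteGraph _) s = max (N + 1) (2 * n (Fin.last t)) := by
      rcases t.eq_zero_or_pos with rfl | ht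
      · refine ⟨_, (ncard_add_nc_range_sigmaMk (V := fun i => Fin (n i)) 0).trans ?_⟩
        rw [hcard, show ∑ i, n i = n 0 from Fin.sum_univ_one n, Nat.card_fin, Fin.last_zero,
          max_eq_right (by have := hpos 0; omega)]
      rcases max_choice (N + 1) (2 * n (Fin.last t)) with h | h <;> rw [h]
      · exact ⟨_, ncard_add_nc_univ (i := 0) (j := Fin.last t) (by simp [Fin.ext_iff]; omega)
          ⟨0, hpos 0⟩ ⟨0, hpos _⟩⟩
      · exact ⟨_, by
          simpa using ncard_add_nc_range_sigmaMk (V := fun i => Fin (n i)) (Fin.last t)⟩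
    exact ⟨sᶜ, by rw [compl_compl, hs]⟩
  · rintro _ ⟨T, rfl⟩
    exact ncard_add_nc_le (fun i => by simpa using hmono (Fin.le_last i)) Tᶜ
end
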